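/- arXiv:2201.05422 — 4 statements merged into one kernel-verified Lean document; each statement's English description precedes it below -/
import Mathlib

section
/- Let $\mathcal{P}_n$ satisfy the specialized $R_I$ recurrence $\mathcal{P}_{n+1}(x)=(x-c_n)\mathcal{P}_n(x)-\lambda_n x\,\mathcal{P}_{n-1}(x)$ and let $\mathcal{P}_n(x;\mu_k)$ be the co-recursive polynomials at level $k$ (only $c_k$ replaced by $c_k+\mu_k$). Then for all $n \geq k$, $\mathcal{P}_n(x)\mathcal{P}_{n+1}(x;\mu_k) - \mathcal{P}_n(x;\mu_k)\mathcal{P}_{n+1}(x) = -\mu_k\left(\prod_{j=k+1}^{n}\lambda_j\right)x^{n-k}\,\mathcal{P}_k(x)^2.$ -/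
open Finset

/-- Wronskian-type identity between the L-orthogonal polynomials and their
generalised co-recursive versions. -/
theorem corecursive_wronskian (c lam : ℕ → ℝ) (k : ℕ) (μ : ℝ)
    (P Pp : ℕ → ℝ → ℝ)
    (hP0 : ∀ x, P 0 x = 1) (hP1 : ∀ x, P 1 x = x - c 0)
    (hP : ∀ n x, P (n + 2) x =
      (x - c (n + 1)) * P (n + 1) x - lam (n + 1) * x * P n x)
    (hPp0 : ∀ x, Pp 0 x = 1)
    (hPp1 : ∀ x, Pp 1 x = x - c 0 - (if k = 0 then μ else 0))
    (hPp : ∀ n x, Pp (n + 2) x =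
      (x - c (n + 1) - (if n + 1 = k then μ else 0)) * Pp (n + 1) x
        - lam (n + 1) * x * Pp n x)
    (n : ℕ) (hn : k ≤ n) (x : ℝ) :
    P n x * Pp (n + 1) x - Pp n x * P (n + 1) x =
      -μ * (∏ j ∈ Icc (k + 1) n, lam j) * x ^ (n - k) * (P k x) ^ 2 := by
  -- below level k, the two families agree
  have heq : ∀ m, m ≤ k → Pp m x = P m x := by
    intro m
    induction m using Nat.strong_induction_on with
    | _ m ih =>
      match m with
      | 0 => intro _; rw [hPp0, hP0]
      | 1 =>
        intro h1
        have hk : k ≠ 0 := by omega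
        rw [hPp1, hP1, if_neg hk]; ring
      | (m + 2) =>
        intro h2
        have hne : m + 1 ≠ k := by omega
        rw [hPp m x, hP m x, if_neg hne, ih m (by omega) (by omega),
          ih (m + 1) (by omega) (by omega)]
        ring
  -- Pp (k+1) = P (k+1) - μ * P k
  have hstep : Pp (k + 1) x = P (k + 1) x - μ * P k x := by
    match k with
    | 0 => rw [hPp1, hP1, hP0, if_pos rfl]; ring
    | (k' + 1) =>
      rw [hPp k' x, hP k' x, if_pos rfl, heq (k' + 1) le_rfl, heq k' (by omega)]
      ring
  induction n, hn using Nat.le_induction with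
  | base =>
    rw [hstep, heq k le_rfl, Icc_eq_empty (by omega), prod_empty,
      Nat.sub_self, pow_zero]
    ring
  | succ n hkn ih =>
    have ih' := ih
    have hne : n + 1 ≠ k := by omega
    rw [hP n x, hPp n x, if_neg hne]
    have hprod : ∏ j ∈ Icc (k + 1) (n + 1), lam j
        = (∏ j ∈ Icc (k + 1) n, lam j) * lam (n + 1) := by
      rw [← Finset.prod_Icc_succ_top (by omega)]
    have hpow : x ^ (n + 1 - k) = x ^ (n - k) * x := by
      rw [← pow_succ]; congr 1; omega
    rw [hprod, hpow]
    linear_combination (lam (n + 1) * x) * ih'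
end

section
/- Let $\mathcal{P}_n$ satisfy $\mathcal{P}_{n+1}(x)=(x-c_n)\mathcal{P}_n(x)-\lambda_n x\,\mathcal{P}_{n-1}(x)$ with $c_n>0$ and $\lambda_n>0$ for all $n$, $\mathcal{P}_{-1}=0$, $\mathcal{P}_0=1$. Then for each $n\geq 1$, the zeros of $\mathcal{P}_n$ are real, simple and positive. -/
open Polynomial


/-- Sign of a product of differences. -/
lemma sign_prod_aux : ∀ {n : ℕ} (r : Fin n → ℝ) (t : ℝ) (k : ℕ), k ≤ n →
    (∀ i : Fin n, (i : ℕ) < k → r i < t) → (∀ i : Fin n, k ≤ (i : ℕ) → t < r i) →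
    0 < (-1 : ℝ) ^ (n - k) * ∏ i, (t - r i) := by
  intro n
  induction n with
  | zero =>
    intro r t k hk _ _
    interval_cases k
    simp
  | succ m ih =>
    intro r t k hk h1 h2
    rcases Nat.lt_or_ge k (m + 1) with hkm | hkm
    · have hk' : k ≤ m := Nat.lt_succ_iff.mp hkm
      have hlast : t < r (Fin.last m) := h2 _ (by simp [Fin.last]; omega)
      have ihh := ih (fun i => r i.castSucc) t k hk'
        (fun i hi => h1 _ (by simpa using hi))
        (fun i hi => h2 _ (by simpa using hi))
      rw [Fin.prod_univ_castSucc]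
      have hms : m + 1 - k = (m - k) + 1 := by omega
      rw [hms, pow_succ]
      have : (-1 : ℝ) ^ (m - k) * -1 * (( ∏ i : Fin m, (t - r i.castSucc)) * (t - r (Fin.last m)))
          = ((-1 : ℝ) ^ (m - k) * ∏ i : Fin m, (t - r i.castSucc)) * (r (Fin.last m) - t) := by ring
      rw [this]
      exact mul_pos ihh (by linarith)
    · have hk' : k = m + 1 := le_antisymm hk hkm
      subst hk'
      simp only [Nat.sub_self, pow_zero, one_mul]
      apply Finset.prod_pos
      intro i _
      have := h1 i i.isLt
      linarith

/-- A monic polynomial of degree n with n distinct roots factors. -/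
lemma eq_prod_of_roots {n : ℕ} (p : Polynomial ℝ) (hm : p.Monic) (hd : p.natDegree = n)
    (t : Fin n → ℝ) (ht : Function.Injective t) (h0 : ∀ i, p.eval (t i) = 0) :
    p = ∏ i, (X - C (t i)) := by
  set q : Polynomial ℝ := ∏ i, (X - C (t i)) with hqdef
  have hqm : q.Monic := monic_prod_of_monic _ _ fun i _ => monic_X_sub_C _
  have hqd : q.natDegree = n := by
    rw [hqdef, natDegree_prod _ _ (fun i _ => X_sub_C_ne_zero _)]
    simp
  by_cases hpq : p - q = 0
  · exact sub_eq_zero.mp hpq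
  · exfalso
    have hdeg : (p - q).natDegree < n := by
      have h1 : (p - q).degree < p.degree := by
        apply degree_sub_lt
        · rw [degree_eq_natDegree hm.ne_zero, degree_eq_natDegree hqm.ne_zero, hd, hqd]
        · exact hm.ne_zero
        · rw [hm.leadingCoeff, hqm.leadingCoeff]
      have := natDegree_lt_natDegree hpq h1
      omega
    have := eq_zero_of_natDegree_lt_card_of_eval_eq_zero (p - q) ht
      (fun i => by
        have : q.eval (t i) = 0 := by
          rw [hqdef, eval_prod]
          exact Finset.prod_eq_zero (Finset.mem_univ i) (by simp)
        simp [eval_sub, h0 i, this])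
      (by simpa using hdeg)
    exact hpq this

lemma root_in_Ioo (p : Polynomial ℝ) {a b : ℝ} (hab : a < b) (e : ℕ)
    (ha : 0 < (-1 : ℝ) ^ (e + 1) * p.eval a) (hb : 0 < (-1 : ℝ) ^ e * p.eval b) :
    ∃ x, a < x ∧ x < b ∧ p.eval x = 0 := by
  have hcont : ContinuousOn (fun x => p.eval x) (Set.Icc a b) :=
    (Polynomial.continuous p).continuousOn
  rcases Nat.even_or_odd e with he | he
  · have hea : (-1 : ℝ) ^ e = 1 := he.neg_one_pow
    have heb : (-1 : ℝ) ^ (e + 1) = -1 := by rw [pow_succ, hea]; ring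
    rw [heb] at ha; rw [hea] at hb
    have h0 : (0 : ℝ) ∈ Set.Ioo (p.eval a) (p.eval b) := ⟨by linarith, by linarith⟩
    obtain ⟨x, hx, hx0⟩ := intermediate_value_Ioo hab.le hcont h0
    exact ⟨x, hx.1, hx.2, hx0⟩
  · have hea : (-1 : ℝ) ^ e = -1 := he.neg_one_pow
    have heb : (-1 : ℝ) ^ (e + 1) = 1 := by rw [pow_succ, hea]; ring
    rw [heb] at ha; rw [hea] at hb
    have h0 : (0 : ℝ) ∈ Set.Ioo (p.eval b) (p.eval a) := ⟨by linarith, by linarith⟩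
    obtain ⟨x, hx, hx0⟩ := intermediate_value_Ioo' hab.le hcont h0
    exact ⟨x, hx.1, hx.2, hx0⟩

lemma key_induction (c lam : ℕ → ℝ)
    (hc : ∀ n, 0 < c n) (hlam : ∀ n, 0 < lam n)
    (P : ℕ → Polynomial ℝ)
    (hP0 : P 0 = 1) (hP1 : P 1 = X - C (c 0))
    (hP : ∀ n, P (n + 2) = (X - C (c (n + 1))) * P (n + 1) - C (lam (n + 1)) * X * P n) :
    ∀ n : ℕ, ∃ (r : Fin n → ℝ) (s : Fin (n + 1) → ℝ),
      StrictMono s ∧ (∀ i, 0 < s i) ∧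
      P n = ∏ i, (X - C (r i)) ∧ P (n + 1) = ∏ i, (X - C (s i)) ∧
      (∀ i : Fin n, s i.castSucc < r i ∧ r i < s i.succ) := by
  intro n
  induction n with
  | zero =>
    refine ⟨Fin.elim0, fun _ => c 0, ?_, fun _ => hc 0, by simp [hP0], by simp [hP1], fun i => i.elim0⟩
    intro a b hab
    rw [Fin.lt_def] at hab
    have ha := a.isLt; have hb := b.isLt
    omega
  | succ n IH =>
    obtain ⟨r, s, hs, hspos, hPn, hQ, hint⟩ := IH
    set p2 : Polynomial ℝ := P (n + 2) with hp2def
    -- degree and monicity of p2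
    have hQm : (P (n + 1)).Monic := by
      rw [hQ]; exact monic_prod_of_monic _ _ fun i _ => monic_X_sub_C _
    have hQd : (P (n + 1)).natDegree = n + 1 := by
      rw [hQ, natDegree_prod _ _ (fun i _ => X_sub_C_ne_zero _)]; simp
    have hPnd : (P n).natDegree = n := by
      rw [hPn, natDegree_prod _ _ (fun i _ => X_sub_C_ne_zero _)]; simp
    have hAm : ((X - C (c (n + 1))) * P (n + 1)).Monic := (monic_X_sub_C _).mul hQm
    have hAd : ((X - C (c (n + 1))) * P (n + 1)).natDegree = n + 2 := by
      rw [natDegree_mul (X_sub_C_ne_zero _) hQm.ne_zero, natDegree_X_sub_C, hQd]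
      omega
    have hBd : (C (lam (n + 1)) * X * P n).natDegree ≤ n + 1 := by
      refine le_trans (natDegree_mul_le) ?_
      have h1 : (C (lam (n + 1)) * X).natDegree ≤ 1 := le_trans natDegree_mul_le (by simp)
      rw [hPnd]; omega
    have hBd' : (C (lam (n + 1)) * X * P n).natDegree < ((X - C (c (n + 1))) * P (n + 1)).natDegree := by
      rw [hAd]; omega
    have hm2 : p2.Monic := by
      rw [hp2def, hP n]
      refine hAm.sub_of_left ?_
      refine lt_of_le_of_lt degree_le_natDegree ?_
      rw [degree_eq_natDegree hAm.ne_zero]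
      exact_mod_cast hBd'
    have hd2 : p2.natDegree = n + 2 := by
      rw [hp2def, hP n, natDegree_sub_eq_left_of_natDegree_lt hBd', hAd]
    -- evaluation of p2 at roots of P (n+1)
    have hevals : ∀ i : Fin (n + 1), p2.eval (s i)
        = -(lam (n + 1) * s i * (P n).eval (s i)) := by
      intro i
      have hQz : (P (n + 1)).eval (s i) = 0 := by
        rw [hQ, eval_prod]
        exact Finset.prod_eq_zero (Finset.mem_univ i) (by simp)
      rw [hp2def, hP n]
      simp [hQz]
    -- sign of P n at s i
    have hsignPn : ∀ i : Fin (n + 1), 0 < (-1 : ℝ) ^ (n - (i : ℕ)) * (P n).eval (s i) := by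
      intro i
      have : (P n).eval (s i) = ∏ j, (s i - r j) := by rw [hPn, eval_prod]; simp
      rw [this]
      apply sign_prod_aux r (s i) (i : ℕ) (by omega)
      · intro j hj
        have h1 : r j < s j.succ := (hint j).2
        have h2 : s j.succ ≤ s i := hs.monotone (by
          rw [Fin.le_def]; simpa using hj)
        linarith
      · intro j hj
        have h1 : s j.castSucc < r j := (hint j).1
        have h2 : s i ≤ s j.castSucc := hs.monotone (by
          rw [Fin.le_def]; simpa using hj)
        linarith
    -- sign of p2 at s i
    have hsignp2 : ∀ i : Fin (n + 1), 0 < (-1 : ℝ) ^ (n - (i : ℕ) + 1) * p2.eval (s i) := by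
      intro i
      rw [hevals i, pow_succ]
      have := mul_pos (mul_pos (hlam (n + 1)) (hspos i)) (hsignPn i)
      nlinarith [this]
    -- sign of p2 at 0
    have hsignp20 : 0 < (-1 : ℝ) ^ (n + 2) * p2.eval 0 := by
      have hQ0 : (P (n + 1)).eval 0 = (-1 : ℝ) ^ (n + 1) * ∏ i, s i := by
        rw [hQ, eval_prod]
        simp only [eval_sub, eval_X, eval_C, zero_sub]
        rw [show (fun i => -s i) = fun i => (-1 : ℝ) * s i from funext fun i => by ring]
        rw [Finset.prod_mul_distrib, Finset.prod_const]
        simp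
      have hp20 : p2.eval 0 = -(c (n + 1)) * ((-1 : ℝ) ^ (n + 1) * ∏ i, s i) := by
        rw [hp2def, hP n]
        simp [hQ0]
      rw [hp20]
      have hps : 0 < ∏ i, s i := Finset.prod_pos fun i _ => hspos i
      have hperiodic : (-1 : ℝ) ^ (n + 2) * (-1 : ℝ) ^ (n + 1) = -1 := by
        rw [← pow_add]
        have : n + 2 + (n + 1) = 2 * (n + 1) + 1 := by omega
        rw [this, pow_succ, pow_mul]
        norm_num
      have hc' := hc (n + 1)
      have h2 : (-1 : ℝ) ^ (n + 2) * (-c (n + 1) * ((-1 : ℝ) ^ (n + 1) * ∏ i, s i))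
          = -((-1 : ℝ) ^ (n + 2) * (-1 : ℝ) ^ (n + 1)) * (c (n + 1) * ∏ i, s i) := by ring
      rw [h2, hperiodic]
      simpa using mul_pos hc' hps
    -- root below s 0
    have hz0 : ∃ x, 0 < x ∧ x < s 0 ∧ p2.eval x = 0 := by
      apply root_in_Ioo p2 (hspos 0) (n + 1)
      · exact hsignp20
      · have := hsignp2 0
        simpa using this
    -- root above each s i
    have hM : ∃ M, s (Fin.last n) < M ∧ 0 < p2.eval M := by
      have htend : Filter.Tendsto (fun x => p2.eval x) Filter.atTop Filter.atTop := by
        apply Polynomial.tendsto_atTop_of_leadingCoeff_nonneg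
        · rw [degree_eq_natDegree hm2.ne_zero, hd2]
          exact_mod_cast Nat.succ_pos _
        · rw [hm2.leadingCoeff]; norm_num
      have h1 := htend.eventually_gt_atTop 0
      have h2 := Filter.eventually_gt_atTop (s (Fin.last n))
      obtain ⟨M, hM1, hM2⟩ := (h2.and h1).exists
      exact ⟨M, hM1, hM2⟩
    have hw : ∀ i : Fin (n + 1), ∃ x, s i < x ∧ p2.eval x = 0 ∧
        ∀ h : (i : ℕ) + 1 < n + 1, x < s ⟨(i : ℕ) + 1, h⟩ := by
      intro i
      by_cases hi : (i : ℕ) + 1 < n + 1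
      · have hlt : s i < s ⟨(i : ℕ) + 1, hi⟩ := hs (by rw [Fin.lt_def]; simp)
        obtain ⟨x, hx1, hx2, hx3⟩ := root_in_Ioo p2 hlt (n - (i : ℕ))
          (by
            have : n - (i : ℕ) + 1 = n - (i : ℕ) + 1 := rfl
            exact hsignp2 i)
          (by
            have h := hsignp2 ⟨(i : ℕ) + 1, hi⟩
            have he : n - ((i : ℕ) + 1) + 1 = n - (i : ℕ) := by omega
            simpa [he] using h)
        exact ⟨x, hx1, hx3, fun _ => hx2⟩
      · have hi' : (i : ℕ) = n := by omega
        have hilast : i = Fin.last n := by rw [Fin.ext_iff]; simpa using hi'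
        obtain ⟨M, hM1, hM2⟩ := hM
        have hlt : s i < M := by
          refine lt_of_le_of_lt (hs.monotone ?_) hM1
          exact Fin.le_last i
        obtain ⟨x, hx1, hx2, hx3⟩ := root_in_Ioo p2 hlt 0
          (by
            have h := hsignp2 i
            have he : n - (i : ℕ) = 0 := by omega
            simpa [he] using h)
          (by simpa using hM2)
        exact ⟨x, hx1, hx3, fun h => absurd h (by omega)⟩
    choose w hw1 hw2 hw3 using hw
    obtain ⟨z0, hz01, hz02, hz03⟩ := hz0
    set t : Fin (n + 2) → ℝ := Fin.cons z0 w with htdef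
    have ht0 : t 0 = z0 := rfl
    have htsucc : ∀ j : Fin (n + 1), t j.succ = w j := fun j => rfl
    -- interlacing t - s
    have hinter : ∀ i : Fin (n + 1), t i.castSucc < s i ∧ s i < t i.succ := by
      intro i
      refine ⟨?_, ?_⟩
      · induction i using Fin.cases with
        | zero => simpa [htdef] using hz02
        | succ j =>
          have : (j.succ : Fin (n+1)).castSucc = (j.castSucc).succ := rfl
          rw [this, htsucc]
          have := hw3 j.castSucc (by simp)
          have heq : (⟨(j.castSucc : ℕ) + 1, by simp⟩ : Fin (n + 1)) = j.succ := by
            rw [Fin.ext_iff]; simp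
          rw [heq] at this
          exact this
      · rw [htsucc]; exact hw1 i
    have htpos : ∀ i, 0 < t i := by
      intro i
      induction i using Fin.cases with
      | zero => exact hz01
      | succ j => rw [htsucc]; exact lt_trans (hspos j) (hw1 j)
    have htmono : StrictMono t := by
      rw [Fin.strictMono_iff_lt_succ]
      intro i
      exact lt_trans (hinter i).1 (hinter i).2
    have htroots : ∀ i, p2.eval (t i) = 0 := by
      intro i
      induction i using Fin.cases with
      | zero => exact hz03
      | succ j => rw [htsucc]; exact hw2 j
    have hfact : p2 = ∏ i, (X - C (t i)) :=
      eq_prod_of_roots p2 hm2 hd2 t htmono.injective htroots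
    exact ⟨s, t, htmono, htpos, hQ, hfact, hinter⟩


/-- The zeros of the L-orthogonal polynomials are real, simple and positive. -/
theorem zeros_real_simple_positive (c lam : ℕ → ℝ)
    (hc : ∀ n, 0 < c n) (hlam : ∀ n, 0 < lam n)
    (P : ℕ → Polynomial ℝ)
    (hP0 : P 0 = 1) (hP1 : P 1 = X - C (c 0))
    (hP : ∀ n, P (n + 2) = (X - C (c (n + 1))) * P (n + 1) - C (lam (n + 1)) * X * P n)
    (n : ℕ) (hn : 1 ≤ n) :
    ∃ r : Fin n → ℝ, StrictMono r ∧ (∀ i, 0 < r i) ∧ P n = ∏ i, (X - C (r i)) := by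
  obtain ⟨m, rfl⟩ : ∃ m, n = m + 1 := ⟨n - 1, by omega⟩
  obtain ⟨r, s, hs, hspos, _, hfac, _⟩ := key_induction c lam hc hlam P hP0 hP1 hP m
  exact ⟨s, hs, hspos, hfac⟩
end

section
/- Let $\mathcal{P}_n$ satisfy $\mathcal{P}_{n+1}(x)=(x-c_n)\mathcal{P}_n(x)-\lambda_n x\,\mathcal{P}_{n-1}(x)$ with $c_n>0$, $\lambda_n>0$, $\mathcal{P}_{-1}=0$, $\mathcal{P}_0=1$. Denote by $x^{(n)}_1 < x^{(n)}_2 < \cdots < x^{(n)}_n$ the zeros of $\mathcal{P}_n$. Then the interlacing property holds: $0 < x^{(n+1)}_1 < x^{(n)}_1 < x^{(n+1)}_2 < x^{(n)}_2 < \cdots < x^{(n+1)}_n < x^{(n)}_n < x^{(n+1)}_{n+1}$ for all $n\geq 1$. -/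
/-!
Induction on `n`, carrying along that the zeros of `P (n + 1)` are positive and interlace those
of `P n`. At a zero `s i` of `P (n + 1)` the recurrence gives
`P (n + 2) (s i) = -λ s i P n (s i)`, whose sign is `(-1) ^ (n + 1 - i)` by interlacing; moreover
`P (n + 2) (0) = -c P (n + 1) (0)` has sign `(-1) ^ (n + 2)`, and the monic `P (n + 2)` is
positive near `+∞`. These `n + 3` alternating signs give `n + 2` zeros of `P (n + 2)`, one in each
gap, which are therefore all of its zeros. Since increasingly ordered zeros are unique, the
conclusion applies to the given `r` and `s`.
-/

open Polynomial Finset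

theorem Fin.card_filter_le_val (n m : ℕ) : #{j : Fin n | m ≤ (j : ℕ)} = n - m := by
  simp only [← not_lt, filter_not, card_sdiff_of_subset (filter_subset _ _), card_univ,
    Fintype.card_fin, Fin.card_filter_val_lt]
  omega

theorem Fin.strictMono_snoc {α : Type*} [Preorder α] {n : ℕ} {f : Fin n → α} {a : α} :
    StrictMono (Fin.snoc f a : Fin (n + 1) → α) ↔ StrictMono f ∧ ∀ i, f i < a := by
  rw [← Fin.insertNth_last', Fin.strictMono_insertNth_iff]
  simp [Fin.castSucc_lt_last]

section Interlacing

variable {α : Type*} [Preorder α] {k : ℕ}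

def Interlaces (s : Fin (k + 1) → α) (r : Fin k → α) : Prop :=
  ∀ i : Fin k, s i.castSucc < r i ∧ r i < s i.succ

variable {s : Fin (k + 1) → α} {r : Fin k → α}

theorem Interlaces.strictMono_left (h : Interlaces s r) : StrictMono s :=
  Fin.strictMono_iff_lt_succ.2 fun i => (h i).1.trans (h i).2

theorem Interlaces.strictMono_right (h : Interlaces s r) : StrictMono r := by
  intro i j hij
  calc r i < s i.succ := (h i).2
    _ ≤ s j.castSucc := h.strictMono_left.monotone (Fin.succ_le_castSucc_iff.2 hij)
    _ < r j := (h j).1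

theorem Interlaces.lt_right_iff (h : Interlaces s r) (i : Fin (k + 1)) (j : Fin k) :
    s i < r j ↔ (i : ℕ) ≤ j := by
  constructor
  · intro hij
    by_contra! hji
    exact lt_asymm hij ((h j).2.trans_le (h.strictMono_left.monotone (Fin.le_def.2 hji)))
  · intro hij
    exact (h.strictMono_left.monotone (Fin.le_def.2 hij)).trans_lt (h j).1

theorem Interlaces.right_ne (h : Interlaces s r) (i : Fin (k + 1)) (j : Fin k) : r j ≠ s i := by
  rcases le_or_gt (i : ℕ) j with hij | hji
  · exact ((h.lt_right_iff i j).2 hij).ne'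
  · exact ((h j).2.trans_le (h.strictMono_left.monotone (Fin.le_def.2 hji))).ne

theorem Interlaces.card_lt_right [DecidableLT α] (h : Interlaces s r) (i : Fin (k + 1)) :
    #{j | s i < r j} = k - i := by
  simp only [h.lt_right_iff, Fin.card_filter_le_val]

end Interlacing

theorem fintype_prod_X_sub_C_eq_multiset_prod {R ι : Type*} [CommRing R] [Fintype ι]
    (f : ι → R) : ∏ i, (X - C (f i)) = ((univ.val.map f).map fun a => X - C a).prod := by
  rw [Multiset.map_map]; rfl

theorem roots_fintype_prod_X_sub_C {R ι : Type*} [CommRing R] [IsDomain R] [Fintype ι]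
    (f : ι → R) : (∏ i, (X - C (f i))).roots = univ.val.map f := by
  rw [fintype_prod_X_sub_C_eq_multiset_prod, roots_multiset_prod_X_sub_C]

theorem eq_fintype_prod_X_sub_C_of_isRoot {R ι : Type*} [CommRing R] [IsDomain R] [Fintype ι]
    {p : R[X]} (hp : p.Monic) (hdeg : p.natDegree = Fintype.card ι) {f : ι → R}
    (hf : Function.Injective f) (hroot : ∀ i, p.IsRoot (f i)) : p = ∏ i, (X - C (f i)) := by
  have hle : univ.val.map f ≤ p.roots :=
    (Multiset.le_iff_subset (univ.nodup.map hf)).2 fun a ha => by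
      obtain ⟨i, -, rfl⟩ := Multiset.mem_map.1 ha
      exact (mem_roots hp.ne_zero).2 (hroot i)
  refine eq_of_monic_of_dvd_of_natDegree_le (monic_prod_X_sub_C f univ) hp ?_ (by simp [hdeg])
  rw [fintype_prod_X_sub_C_eq_multiset_prod]
  exact (Multiset.prod_X_sub_C_dvd_iff_le_roots hp.ne_zero _).2 hle

theorem eq_of_prod_X_sub_C_eq {R : Type*} [CommRing R] [IsDomain R] [LinearOrder R] {m : ℕ}
    {f g : Fin m → R} (hf : StrictMono f) (hg : StrictMono g)
    (h : ∏ i, (X - C (f i)) = ∏ i, (X - C (g i))) : f = g := by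
  refine (hf.range_inj hg).1 (Set.ext fun a => ?_)
  simpa [roots_fintype_prod_X_sub_C, eq_comm] using congrArg (a ∈ ·.roots) h

theorem neg_one_pow_card_mul_prod_sub_pos {R ι : Type*} [CommRing R] [LinearOrder R]
    [IsStrictOrderedRing R] [Fintype ι] {f : ι → R} {x : R} (hx : ∀ i, f i ≠ x) :
    0 < (-1) ^ #{i | x < f i} * ∏ i, (x - f i) := by
  have hsign : (-1 : R) ^ #{i | x < f i} = ∏ i, if x < f i then -1 else 1 := by
    rw [prod_ite, prod_const, prod_const_one, mul_one]
  rw [hsign, ← prod_mul_distrib]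
  refine prod_pos fun i _ => ?_
  split_ifs with h
  · simpa using h
  · simpa using lt_of_le_of_ne (not_lt.1 h) (hx i)

theorem mul_neg_of_neg_one_pow_mul_pos {R : Type*} [CommRing R] [LinearOrder R]
    [IsStrictOrderedRing R] {a b : R} (e : ℕ) (ha : 0 < (-1) ^ (e + 1) * a)
    (hb : 0 < (-1) ^ e * b) : a * b < 0 := by
  rcases neg_one_pow_eq_or R e with h | h <;> simp only [pow_succ, h] at ha hb <;> nlinarith

theorem exists_isRoot_mem_Ioo_of_mul_neg (p : ℝ[X]) {a b : ℝ} (hab : a < b)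
    (h : p.eval a * p.eval b < 0) : ∃ x ∈ Set.Ioo a b, p.IsRoot x := by
  have hcont := p.continuous.continuousOn (s := Set.Icc a b)
  rcases mul_neg_iff.1 h with ⟨ha, hb⟩ | ⟨ha, hb⟩
  · exact intermediate_value_Ioo' hab.le hcont ⟨hb, ha⟩
  · exact intermediate_value_Ioo hab.le hcont ⟨ha, hb⟩

theorem exists_interlacing_roots_of_alternating_sign {m : ℕ} {p : ℝ[X]} (hp : p.Monic)
    (hdeg : p.natDegree = m) {u : Fin (m + 1) → ℝ} (hu : StrictMono u)
    (hsign : ∀ j : Fin (m + 1), 0 < (-1) ^ (m - j) * p.eval (u j)) :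
    ∃ t : Fin m → ℝ, Interlaces u t ∧ p = ∏ i, (X - C (t i)) := by
  have hroot (i : Fin m) : ∃ x ∈ Set.Ioo (u i.castSucc) (u i.succ), p.IsRoot x := by
    refine exists_isRoot_mem_Ioo_of_mul_neg p (hu Fin.castSucc_lt_succ)
      (mul_neg_of_neg_one_pow_mul_pos (m - (i + 1)) ?_ (hsign i.succ))
    have he : m - (i.castSucc : ℕ) = m - (i + 1) + 1 := by rw [Fin.val_castSucc]; omega
    simpa only [he] using hsign i.castSucc
  choose t ht hroot using hroot
  have hint : Interlaces u t := fun i => ht i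
  exact ⟨t, hint,
    eq_fintype_prod_X_sub_C_of_isRoot hp (by simp [hdeg]) hint.strictMono_right.injective hroot⟩

theorem exists_interlacing_roots_above_of_alternating_sign {n : ℕ} {p : ℝ[X]} (hp : p.Monic)
    (hdeg : p.natDegree = n + 1) {a : ℝ} {s : Fin n → ℝ} (hs : StrictMono s)
    (has : ∀ i, a < s i) (ha : 0 < (-1) ^ (n + 1) * p.eval a)
    (hsign : ∀ i : Fin n, 0 < (-1) ^ (n - i) * p.eval (s i)) :
    ∃ t : Fin (n + 1) → ℝ, a < t 0 ∧ Interlaces t s ∧ p = ∏ i, (X - C (t i)) := by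
  have hpos : ∀ᶠ x in Filter.atTop, 0 < p.eval x :=
    (p.tendsto_atTop_of_leadingCoeff_nonneg (natDegree_pos_iff_degree_pos.1 (by omega))
      (by simp [hp.leadingCoeff])).eventually_gt_atTop 0
  obtain ⟨M, haM, hsM, hM⟩ := ((Filter.eventually_gt_atTop a).and
    ((Filter.eventually_all.2 fun i => Filter.eventually_gt_atTop (s i)).and hpos)).exists
  set u : Fin (n + 2) → ℝ := Fin.cons a (Fin.snoc s M : Fin (n + 1) → ℝ)
  have hu : StrictMono u := by
    refine Fin.strictMono_cons.2 ⟨fun j => ?_, Fin.strictMono_snoc.2 ⟨hs, hsM⟩⟩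
    induction j using Fin.lastCases <;> simp [haM, has]
  have hsign' (j : Fin (n + 2)) : 0 < (-1) ^ (n + 1 - j) * p.eval (u j) := by
    induction j using Fin.cases with
    | zero => simpa [u] using ha
    | succ j =>
      induction j using Fin.lastCases with
      | last => simpa [u] using hM
      | cast i => simpa [u] using hsign i
  obtain ⟨t, hut, hpt⟩ := exists_interlacing_roots_of_alternating_sign hp hdeg hu hsign'
  refine ⟨t, by simpa [u] using (hut 0).1,
    fun i => ⟨by simpa [u] using (hut i.castSucc).2, by simpa [u] using (hut i.succ).1⟩, hpt⟩

theorem monic_and_natDegree_three_term {R : Type*} [CommRing R] [Nontrivial R] {k : ℕ}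
    {S T : R[X]} (c l : R) (hS : S.Monic) (hSdeg : S.natDegree = k + 1) (hT : T.natDegree ≤ k) :
    ((X - C c) * S - C l * X * T).Monic ∧ ((X - C c) * S - C l * X * T).natDegree = k + 2 := by
  have hlead : ((X - C c) * S).natDegree = k + 2 := by
    rw [(monic_X_sub_C c).natDegree_mul hS, natDegree_X_sub_C, hSdeg, add_comm]
  have hlower : (C l * X * T).natDegree < ((X - C c) * S).natDegree := by
    rw [hlead, mul_assoc]
    calc (C l * (X * T)).natDegree ≤ (X * T).natDegree := natDegree_C_mul_le l _
      _ ≤ X.natDegree + T.natDegree := natDegree_mul_le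
      _ < k + 2 := by linarith [natDegree_X_le (R := R)]
  exact ⟨((monic_X_sub_C c).mul hS).sub_of_left (degree_lt_degree hlower),
    (natDegree_sub_eq_left_of_natDegree_lt hlower).trans hlead⟩

theorem Interlaces.exists_interlaces_three_term {k : ℕ} {c l : ℝ} (hc : 0 < c) (hl : 0 < l)
    {s : Fin (k + 1) → ℝ} {r : Fin k → ℝ} (hs0 : 0 < s 0) (hsr : Interlaces s r) :
    ∃ t : Fin (k + 2) → ℝ, 0 < t 0 ∧ Interlaces t s ∧
      (X - C c) * ∏ i, (X - C (s i)) - C l * X * ∏ i, (X - C (r i)) = ∏ i, (X - C (t i)) := by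
  have hspos (i : Fin (k + 1)) : 0 < s i :=
    hs0.trans_le (hsr.strictMono_left.monotone (Fin.zero_le i))
  obtain ⟨hQ, hQdeg⟩ := monic_and_natDegree_three_term (k := k) (T := ∏ i, (X - C (r i))) c l
    (monic_prod_X_sub_C s univ) (by simp) (by simp)
  refine exists_interlacing_roots_above_of_alternating_sign hQ hQdeg hsr.strictMono_left hspos
    ?_ ?_
  · have hcard : #{j | (0 : ℝ) < s j} = k + 1 := by
      simp [filter_true_of_mem fun j _ => hspos j]
    have := neg_one_pow_card_mul_prod_sub_pos (f := s) (x := 0) fun j => (hspos j).ne'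
    rw [hcard] at this
    simp only [eval_sub, eval_mul, eval_X, eval_C, eval_prod, mul_zero, zero_mul, sub_zero]
    calc 0 < c * ((-1) ^ (k + 1) * ∏ i, (0 - s i)) := mul_pos hc this
      _ = _ := by ring
  · intro i
    have := neg_one_pow_card_mul_prod_sub_pos (hsr.right_ne i)
    rw [hsr.card_lt_right] at this
    simp only [eval_sub, eval_mul, eval_X, eval_C, eval_prod, sub_self, prod_eq_zero (mem_univ i)]
    rw [Nat.sub_add_comm (Nat.lt_succ_iff.1 i.isLt), pow_succ]
    calc 0 < l * s i * ((-1) ^ (k - i) * ∏ j, (s i - r j)) :=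
          mul_pos (mul_pos hl (hspos i)) this
      _ = _ := by ring

theorem exists_interlacing_roots_of_three_term_recurrence (c lam : ℕ → ℝ)
    (hc : ∀ n, 0 < c n) (hlam : ∀ n, 0 < lam n) (P : ℕ → ℝ[X]) (hP0 : P 0 = 1)
    (hP1 : P 1 = X - C (c 0))
    (hP : ∀ n, P (n + 2) = (X - C (c (n + 1))) * P (n + 1) - C (lam (n + 1)) * X * P n)
    (k : ℕ) :
    ∃ (r : Fin k → ℝ) (s : Fin (k + 1) → ℝ), 0 < s 0 ∧ Interlaces s r ∧
      P k = ∏ i, (X - C (r i)) ∧ P (k + 1) = ∏ i, (X - C (s i)) := by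
  induction k with
  | zero =>
    exact ⟨Fin.elim0, fun _ => c 0, hc 0, fun i => i.elim0, by simp [hP0], by simp [hP1]⟩
  | succ k ih =>
    obtain ⟨r, s, hs0, hsr, hrP, hsP⟩ := ih
    obtain ⟨t, ht0, hts, htP⟩ :=
      hsr.exists_interlaces_three_term (hc (k + 1)) (hlam (k + 1)) hs0
    exact ⟨s, t, ht0, hts, hsP, by rw [hP, hsP, hrP, htP]⟩

theorem zeros_interlacing_general (c lam : ℕ → ℝ)
    (hc : ∀ n, 0 < c n) (hlam : ∀ n, 0 < lam n)
    (P : ℕ → Polynomial ℝ)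
    (hP0 : P 0 = 1) (hP1 : P 1 = X - C (c 0))
    (hP : ∀ n, P (n + 2) = (X - C (c (n + 1))) * P (n + 1) - C (lam (n + 1)) * X * P n)
    (n : ℕ)
    (r : Fin n → ℝ) (hr : StrictMono r) (hrP : P n = ∏ i, (X - C (r i)))
    (s : Fin (n + 1) → ℝ) (hs : StrictMono s) (hsP : P (n + 1) = ∏ i, (X - C (s i))) :
    0 < s 0 ∧ ∀ i : Fin n, s i.castSucc < r i ∧ r i < s i.succ := by
  obtain ⟨r₀, s₀, hs₀, hsr₀, hrP₀, hsP₀⟩ :=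
    exists_interlacing_roots_of_three_term_recurrence c lam hc hlam P hP0 hP1 hP n
  obtain rfl : r = r₀ := eq_of_prod_X_sub_C_eq hr hsr₀.strictMono_right (hrP.symm.trans hrP₀)
  obtain rfl : s = s₀ := eq_of_prod_X_sub_C_eq hs hsr₀.strictMono_left (hsP.symm.trans hsP₀)
  exact ⟨hs₀, hsr₀⟩

/-- Interlacing of the zeros of consecutive L-orthogonal polynomials. -/
theorem zeros_interlacing (c lam : ℕ → ℝ)
    (hc : ∀ n, 0 < c n) (hlam : ∀ n, 0 < lam n)
    (P : ℕ → Polynomial ℝ)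
    (hP0 : P 0 = 1) (hP1 : P 1 = X - C (c 0))
    (hP : ∀ n, P (n + 2) = (X - C (c (n + 1))) * P (n + 1) - C (lam (n + 1)) * X * P n)
    (n : ℕ) (hn : 1 ≤ n)
    (r : Fin n → ℝ) (hr : StrictMono r) (hrP : P n = ∏ i, (X - C (r i)))
    (s : Fin (n + 1) → ℝ) (hs : StrictMono s) (hsP : P (n + 1) = ∏ i, (X - C (s i))) :
    0 < s 0 ∧ ∀ i : Fin n, s i.castSucc < r i ∧ r i < s i.succ :=
  zeros_interlacing_general c lam hc hlam P hP0 hP1 hP n r hr hrP s hs hsP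
end

section
/- Define monic polynomials $\mathcal{P}^{(a,c)}_n(x) = \dfrac{(c)_n}{(1-a)_n} \,{}_2F_1(-n, 1-a; 1-c-n; x)$, where $(q)_n$ is the Pochhammer symbol. Then $\mathcal{P}^{(a,c)}_n$ satisfies the recurrence $\mathcal{P}^{(a,c)}_{n+1}(x) = \Big(x - \dfrac{c+n}{a-n-1}\Big)\mathcal{P}^{(a,c)}_n(x) - \dfrac{n(c+n-a)}{(a-n-1)(a-n)}\,x\,\mathcal{P}^{(a,c)}_{n-1}(x)$ for $n\geq 1$, with $\mathcal{P}^{(a,c)}_{-1}=0$ and $\mathcal{P}^{(a,c)}_0=1$, provided the parameters $a,c$ avoid the poles of the coefficients. -/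
open Finset

/-- Pochhammer symbol `(q)_j`. -/
noncomputable def poch (q : ℝ) (j : ℕ) : ℝ := ∏ i ∈ Finset.range j, (q + i)

/-- Terminating Gauss hypergeometric polynomial `₂F₁(-n, b; c; x)`. -/
noncomputable def gaussF (n : ℕ) (b c x : ℝ) : ℝ :=
  ∑ j ∈ Finset.range (n + 1),
    poch (-(n : ℝ)) j * poch b j / (poch c j * (Nat.factorial j)) * x ^ j

/-- The monic L-Jacobi polynomials. -/
noncomputable def LJacobi (a c : ℝ) (n : ℕ) (x : ℝ) : ℝ :=
  poch c n / poch (1 - a) n * gaussF n (1 - a) (1 - c - (n : ℝ)) x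

lemma poch_zero (q : ℝ) : poch q 0 = 1 := by simp [poch]

lemma poch_succ (q : ℝ) (n : ℕ) : poch q (n+1) = poch q n * (q + n) := by
  simp [poch, Finset.prod_range_succ]

lemma F2' (j k : ℕ) : poch (-((j+k : ℕ) : ℝ)) j * (Nat.factorial k : ℝ)
    = (-1)^j * (Nat.factorial (j+k) : ℝ) := by
  induction j generalizing k with
  | zero => simp [poch_zero]
  | succ j ih =>
    have h := ih (k+1)
    rw [poch_succ]
    have e : ((j + 1 + k : ℕ) : ℝ) = ((j + (k+1) : ℕ) : ℝ) := by push_cast; ring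
    rw [e]
    have e2 : j + 1 + k = j + (k + 1) := by omega
    rw [e2]
    have hfact : (Nat.factorial (k+1) : ℝ) = (k+1) * Nat.factorial k := by
      push_cast [Nat.factorial_succ]; ring
    rw [hfact] at h
    push_cast at h ⊢
    linear_combination (-1 : ℝ) * h

lemma F1' (c : ℝ) (j k : ℕ) : poch c k * poch (1 - c - ((j+k : ℕ) : ℝ)) j
    = (-1)^j * poch c (j+k) := by
  induction j generalizing k with
  | zero => simp [poch_zero]
  | succ j ih =>
    have h := ih (k+1)
    rw [poch_succ]
    have e : (1 - c - ((j + 1 + k : ℕ) : ℝ)) = (1 - c - ((j + (k+1) : ℕ) : ℝ)) := by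
      push_cast; ring
    rw [e]
    have e2 : j + 1 + k = j + (k + 1) := by omega
    rw [e2]
    rw [poch_succ] at h
    push_cast at h ⊢
    linear_combination (-1 : ℝ) * h

lemma term_eq (a c : ℝ) (j k : ℕ) (hq : poch (1 - c - ((j+k : ℕ) : ℝ)) j ≠ 0) :
    poch c (j+k) * (poch (-((j+k : ℕ) : ℝ)) j * poch (1-a) j /
        (poch (1 - c - ((j+k : ℕ) : ℝ)) j * (Nat.factorial j : ℝ)))
    = ((j+k).choose j : ℝ) * poch (1-a) j * poch c k := by
  have hF : (Nat.factorial j : ℝ) ≠ 0 := by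
    exact_mod_cast Nat.factorial_ne_zero j
  have hK : (Nat.factorial k : ℝ) ≠ 0 := by
    exact_mod_cast Nat.factorial_ne_zero k
  have f1 := F1' c j k
  have f2 := F2' j k
  have hch : ((j+k).choose j : ℝ) * (Nat.factorial j : ℝ) * (Nat.factorial k : ℝ)
      = (Nat.factorial (j+k) : ℝ) := by
    have h := Nat.choose_mul_factorial_mul_factorial (Nat.le_add_right j k)
    rw [Nat.add_sub_cancel_left] at h
    exact_mod_cast h
  rw [← mul_div_assoc, div_eq_iff (mul_ne_zero hq hF)]
  apply mul_right_cancel₀ hK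
  linear_combination (poch c (j+k) * poch (1-a) j) * f2
    - (((j+k).choose j : ℝ) * poch (1-a) j * (Nat.factorial j : ℝ) * (Nat.factorial k : ℝ)) * f1
    - ((-1:ℝ)^j * poch c (j+k) * poch (1-a) j) * hch

lemma term_eq' (a c : ℝ) (n j : ℕ) (hj : j ≤ n) (hq : poch (1 - c - (n : ℝ)) j ≠ 0) :
    poch c n * (poch (-(n : ℝ)) j * poch (1-a) j /
        (poch (1 - c - (n : ℝ)) j * (Nat.factorial j : ℝ)))
    = (n.choose j : ℝ) * poch (1-a) j * poch c (n-j) := by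
  obtain ⟨k, rfl⟩ : ∃ k, n = j + k := ⟨n - j, by omega⟩
  rw [Nat.add_sub_cancel_left]
  exact term_eq a c j k hq

lemma LJacobi_eq (a c : ℝ) (n : ℕ) (hq : ∀ j, j ≤ n → poch (1 - c - (n : ℝ)) j ≠ 0) (x : ℝ) :
    LJacobi a c n x
      = (∑ j ∈ range (n+1), (n.choose j : ℝ) * poch (1-a) j * poch c (n-j) * x^j) /
          poch (1-a) n := by
  unfold LJacobi gaussF
  rw [Finset.sum_div, Finset.mul_sum]
  refine Finset.sum_congr rfl fun j hj => ?_
  rw [Finset.mem_range] at hj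
  have h := term_eq' a c n j (by omega) (hq j (by omega))
  calc poch c n / poch (1-a) n *
        (poch (-(n:ℝ)) j * poch (1-a) j / (poch (1-c-(n:ℝ)) j * (Nat.factorial j : ℝ)) * x^j)
      = (poch c n * (poch (-(n:ℝ)) j * poch (1-a) j /
          (poch (1-c-(n:ℝ)) j * (Nat.factorial j : ℝ)))) * x^j / poch (1-a) n := by ring
    _ = ((n.choose j : ℝ) * poch (1-a) j * poch c (n-j)) * x^j / poch (1-a) n := by rw [h]
    _ = (n.choose j : ℝ) * poch (1-a) j * poch c (n-j) * x^j / poch (1-a) n := by ring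

lemma key_coeff (a c : ℝ) (j k : ℕ) :
    ((j+k+2).choose (j+1) : ℝ) * poch (1-a) (j+1) * poch c (k+1)
    = (((j:ℝ)+(k:ℝ)+2) - a) * ((j+k+1).choose j : ℝ) * poch (1-a) j * poch c (k+1)
    + (c + ((j:ℝ)+(k:ℝ)+1)) * ((j+k+1).choose (j+1) : ℝ) * poch (1-a) (j+1) * poch c k
    - ((j:ℝ)+(k:ℝ)+1) * (c + ((j:ℝ)+(k:ℝ)+1) - a) * ((j+k).choose j : ℝ) * poch (1-a) j * poch c k := by
  have h1 : ((j+k+2).choose (j+1) : ℝ)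
      = ((j+k+1).choose j : ℝ) + ((j+k+1).choose (j+1) : ℝ) := by
    have : (j+k+2).choose (j+1) = (j+k+1).choose j + (j+k+1).choose (j+1) :=
      Nat.choose_succ_succ' (j+k+1) j
    exact_mod_cast this
  have h2 : ((j:ℝ)+(k:ℝ)+1) * ((j+k).choose j : ℝ)
      = ((j+k+1).choose (j+1) : ℝ) * ((j:ℝ)+1) := by
    have := Nat.add_one_mul_choose_eq (j+k) j
    exact_mod_cast this
  have h3 : ((j+k+1).choose (j+1) : ℝ) * ((j:ℝ)+1)
      = ((j+k+1).choose j : ℝ) * ((k:ℝ)+1) := by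
    have := Nat.choose_succ_right_eq (j+k+1) j
    rw [show j+k+1-j = k+1 from by omega] at this
    exact_mod_cast this
  rw [poch_succ (1-a) j, poch_succ c k]
  linear_combination (poch (1-a) j * poch c k * (1-a+(j:ℝ)) * (c+(k:ℝ))) * h1
    + (poch (1-a) j * poch c k * (c+(j:ℝ)+(k:ℝ)+1-a)) * h2
    + (poch (1-a) j * poch c k * (c+(k:ℝ))) * h3

lemma coeff_all (a c : ℝ) (n j : ℕ) (hn : 1 ≤ n) (hj : j ≤ n) :
    ((n+1).choose (j+1) : ℝ) * poch (1-a) (j+1) * poch c (n-j)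
    = ((n:ℝ)+1-a) * ((n.choose j : ℝ) * poch (1-a) j * poch c (n-j))
    + (c+(n:ℝ)) * ((n.choose (j+1) : ℝ) * poch (1-a) (j+1) * poch c (n-1-j))
    - (n:ℝ)*(c+(n:ℝ)-a) * (((n-1).choose j : ℝ) * poch (1-a) j * poch c (n-1-j)) := by
  rcases eq_or_lt_of_le hj with rfl | hlt
  · simp [Nat.choose_succ_self, Nat.choose_eq_zero_of_lt (show j-1 < j from by omega),
      Nat.choose_self, Nat.sub_self, poch_zero, poch_succ]
    ring
  · obtain ⟨k, rfl⟩ : ∃ k, n = j + k + 1 := ⟨n - j - 1, by omega⟩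
    have h := key_coeff a c j k
    rw [show j+k+1+1 = j+k+2 from by omega, show j+k+1-j = k+1 from by omega,
      show j+k+1-1-j = k from by omega, show j+k+1-1 = j+k from by omega]
    push_cast
    linear_combination h

lemma sum_rec (a c x : ℝ) (n : ℕ) (hn : 1 ≤ n) :
    ∑ j ∈ range (n+2), ((n+1).choose j : ℝ) * poch (1-a) j * poch c (n+1-j) * x^j
    = ((n:ℝ)+1-a) * x * ∑ j ∈ range (n+1), (n.choose j : ℝ) * poch (1-a) j * poch c (n-j) * x^j
      + (c+(n:ℝ)) * ∑ j ∈ range (n+1), (n.choose j : ℝ) * poch (1-a) j * poch c (n-j) * x^j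
      - (n:ℝ)*(c+(n:ℝ)-a) * x *
          ∑ j ∈ range n, ((n-1).choose j : ℝ) * poch (1-a) j * poch c (n-1-j) * x^j := by
  have h1 : ∑ j ∈ range (n+2), ((n+1).choose j : ℝ) * poch (1-a) j * poch c (n+1-j) * x^j
      = (∑ j ∈ range (n+1),
          ((n+1).choose (j+1) : ℝ) * poch (1-a) (j+1) * poch c (n-j) * x^(j+1))
        + poch c (n+1) := by
    rw [Finset.sum_range_succ' _ (n+1)]
    congr 1
    · refine Finset.sum_congr rfl fun j hj => ?_
      rw [show n+1-(j+1) = n-j from by omega]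
    · simp [poch_zero]
  have h2 : ((n:ℝ)+1-a) * x * ∑ j ∈ range (n+1), (n.choose j : ℝ) * poch (1-a) j * poch c (n-j) * x^j
      = ∑ j ∈ range (n+1),
          ((n:ℝ)+1-a) * ((n.choose j : ℝ) * poch (1-a) j * poch c (n-j)) * x^(j+1) := by
    rw [Finset.mul_sum]
    exact Finset.sum_congr rfl fun j _ => by ring
  have h3 : (c+(n:ℝ)) * ∑ j ∈ range (n+1), (n.choose j : ℝ) * poch (1-a) j * poch c (n-j) * x^j
      = (∑ j ∈ range (n+1),
          (c+(n:ℝ)) * ((n.choose (j+1) : ℝ) * poch (1-a) (j+1) * poch c (n-1-j)) * x^(j+1))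
        + (c+(n:ℝ)) * poch c n := by
    have pad : (∑ j ∈ range (n+1),
          (c+(n:ℝ)) * ((n.choose (j+1) : ℝ) * poch (1-a) (j+1) * poch c (n-1-j)) * x^(j+1))
        = ∑ j ∈ range n,
          (c+(n:ℝ)) * ((n.choose (j+1) : ℝ) * poch (1-a) (j+1) * poch c (n-1-j)) * x^(j+1) := by
      rw [Finset.sum_range_succ, Nat.choose_succ_self]
      simp
    rw [pad, Finset.sum_range_succ' _ n, mul_add, Finset.mul_sum]
    congr 1
    · refine Finset.sum_congr rfl fun j hj => ?_
      rw [show n-(j+1) = n-1-j from by omega]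
      ring
    · simp [poch_zero]
  have h4 : (n:ℝ)*(c+(n:ℝ)-a) * x *
        ∑ j ∈ range n, ((n-1).choose j : ℝ) * poch (1-a) j * poch c (n-1-j) * x^j
      = ∑ j ∈ range (n+1),
          (n:ℝ)*(c+(n:ℝ)-a) * (((n-1).choose j : ℝ) * poch (1-a) j * poch c (n-1-j)) * x^(j+1) := by
    rw [Finset.sum_range_succ, Nat.choose_eq_zero_of_lt (show n-1 < n from by omega)]
    rw [Finset.mul_sum]
    simp only [Nat.cast_zero, zero_mul, mul_zero, add_zero]
    exact Finset.sum_congr rfl fun j _ => by ring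
  rw [h1, h2, h3, h4]
  rw [show ∀ (S1 S2 S3 : ℝ) (K : ℝ), S1 + (S2 + K) - S3 = (S1 + S2 - S3) + K from by intros; ring]
  rw [← Finset.sum_add_distrib, ← Finset.sum_sub_distrib]
  congr 1
  · refine Finset.sum_congr rfl fun j hj => ?_
    rw [Finset.mem_range] at hj
    have h := coeff_all a c n j hn (by omega)
    linear_combination x^(j+1) * h
  · rw [poch_succ]
    ring

/-- The L-Jacobi polynomials satisfy the specialized `R_I` recurrence. -/
theorem LJacobi_recurrence (a c : ℝ) (n : ℕ) (hn : 1 ≤ n)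
    (hden1 : a - (n : ℝ) - 1 ≠ 0) (hden2 : a - (n : ℝ) ≠ 0)
    (hpoch : ∀ m : ℕ, m ≤ n + 1 → poch (1 - a) m ≠ 0)
    (hpoch' : ∀ m j : ℕ, m ≤ n + 1 → j ≤ m → poch (1 - c - (m : ℝ)) j ≠ 0)
    (x : ℝ) :
    LJacobi a c (n + 1) x =
      (x - (c + n) / (a - n - 1)) * LJacobi a c n x -
        (n * (c + n - a) / ((a - n - 1) * (a - n))) * x * LJacobi a c (n - 1) x := by
  rw [LJacobi_eq a c (n+1) (fun j hj => hpoch' (n+1) j le_rfl hj) x,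
      LJacobi_eq a c n (fun j hj => hpoch' n j (by omega) hj) x,
      LJacobi_eq a c (n-1) (fun j hj => hpoch' (n-1) j (by omega) hj) x]
  rw [show n+1+1 = n+2 from by omega, show n-1+1 = n from by omega]
  have hs := sum_rec a c x n hn
  have c1 : ((n-1 : ℕ) : ℝ) = (n:ℝ)-1 := by
    rw [Nat.cast_sub hn, Nat.cast_one]
  have hP1 := hpoch (n+1) le_rfl
  have hPn := hpoch n (by omega)
  have hPm := hpoch (n-1) (by omega)
  have e1 : poch (1-a) (n+1) = poch (1-a) n * (1-a+(n:ℝ)) := poch_succ _ n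
  have e2 : poch (1-a) n = poch (1-a) (n-1) * (1-a+((n:ℝ)-1)) := by
    conv_lhs => rw [show n = (n-1)+1 from by omega]
    rw [poch_succ _ (n-1), c1]
  have h1a : (1-a+(n:ℝ)) ≠ 0 := fun h => hden1 (by linarith)
  have h2a : (1-a+((n:ℝ)-1)) ≠ 0 := fun h => hden2 (by linarith)
  have hcast : ∀ j : ℕ, (((n+1:ℕ)):ℝ) = (n:ℝ)+1 := by intro _; push_cast; ring
  have h3 : ((n:ℝ) - a) ≠ 0 := fun h => hden2 (by linarith)
  have h4 : ((n:ℝ) + 1 - a) ≠ 0 := fun h => hden1 (by linarith)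
  rw [hs, e1, e2]
  field_simp
  ring
end
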